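/- arXiv:quant-ph/0501142 — 2 statements merged into one kernel-verified Lean document; each statement's English description precedes it below -/
import Mathlib

section
/- For every total Boolean function f, the deterministic decision tree complexity satisfies D(f) ≤ (bs(f) + 1) · ndeg(f), where ndeg(f) is the minimal degree of a real polynomial p with p(x) = 0 iff f(x) = 0 for all Boolean x. -/
inductive DTree (N : ℕ) : Type
  | leaf : Bool → DTree N
  | node : Fin N → DTree N → DTree N → DTree N

def DTree.eval {N : ℕ} : DTree N → (Fin N → Bool) → Bool
  | .leaf b, _ => b
  | .node i t0 t1, x => if x i then t1.eval x else t0.eval x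

def DTree.depth {N : ℕ} : DTree N → ℕ
  | .leaf _ => 0
  | .node _ t0 t1 => 1 + max t0.depth t1.depth

def DTree.queries {N : ℕ} : DTree N → (Fin N → Bool) → Finset (Fin N)
  | .leaf _, _ => ∅
  | .node i t0 t1, x => insert i (if x i then t1.queries x else t0.queries x)

noncomputable def Dcomplexity {N : ℕ} (f : (Fin N → Bool) → Bool) : ℕ :=
  sInf {d | ∃ T : DTree N, T.depth ≤ d ∧ ∀ x, T.eval x = f x}

def flipSet {N : ℕ} (x : Fin N → Bool) (B : Finset (Fin N)) : Fin N → Bool :=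
  fun i => if i ∈ B then !(x i) else x i

def SensitiveBlock {N : ℕ} (f : (Fin N → Bool) → Bool) (x : Fin N → Bool)
    (B : Finset (Fin N)) : Prop :=
  f (flipSet x B) ≠ f x

noncomputable def bsAt {N : ℕ} (f : (Fin N → Bool) → Bool) (x : Fin N → Bool) : ℕ :=
  sSup {k | ∃ Bs : Finset (Finset (Fin N)), Bs.card = k ∧
    (∀ B ∈ Bs, SensitiveBlock f x B) ∧
    (Bs : Set (Finset (Fin N))).Pairwise (fun B B' => Disjoint B B')}

noncomputable def blockSens {N : ℕ} (f : (Fin N → Bool) → Bool) : ℕ :=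
  sSup (Set.range (bsAt f))

noncomputable def sensAt {N : ℕ} (f : (Fin N → Bool) → Bool) (x : Fin N → Bool) : ℕ :=
  {i : Fin N | SensitiveBlock f x {i}}.ncard

noncomputable def sens {N : ℕ} (f : (Fin N → Bool) → Bool) : ℕ :=
  sSup (Set.range (sensAt f))

def MinimalSensitiveBlock {N : ℕ} (f : (Fin N → Bool) → Bool) (x : Fin N → Bool)
    (B : Finset (Fin N)) : Prop :=
  SensitiveBlock f x B ∧ ∀ B' ⊂ B, ¬ SensitiveBlock f x B'

def boolToReal (b : Bool) : ℝ := if b then 1 else 0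

def Multilinear {N : ℕ} (p : MvPolynomial (Fin N) ℝ) : Prop :=
  ∀ m ∈ p.support, ∀ i, m i ≤ 1

/-- `p` nondeterministically represents `f`: it vanishes exactly on the zeros of `f`. -/
def NRepresents {N : ℕ} (p : MvPolynomial (Fin N) ℝ) (f : (Fin N → Bool) → Bool) : Prop :=
  ∀ x : Fin N → Bool, MvPolynomial.eval (fun i => boolToReal (x i)) p = 0 ↔ f x = false

/-- `p` exactly represents `f` on the Boolean cube. -/
def ERepresents {N : ℕ} (p : MvPolynomial (Fin N) ℝ) (f : (Fin N → Bool) → Bool) : Prop :=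
  ∀ x : Fin N → Bool, MvPolynomial.eval (fun i => boolToReal (x i)) p = boolToReal (f x)

/-- nondeterministic degree -/
noncomputable def ndeg {N : ℕ} (f : (Fin N → Bool) → Bool) : ℕ :=
  sInf {d | ∃ p : MvPolynomial (Fin N) ℝ, Multilinear p ∧ NRepresents p f ∧ p.totalDegree = d}

/-!
Take a multilinear `p` of degree `ndeg f` that vanishes exactly on the zeros of `f`, and
repeatedly query all variables of a maximal monomial `M` of the current restriction of `p`.
At a zero `z` of `f` some setting of the variables of `M` makes `p` nonzero, since the restriction
of `p` to that subcube keeps the nonzero top coefficient of `M`; so `z` has a sensitive block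
inside `M`. Hence every round of at most `ndeg f` queries lowers the block sensitivity of `f` at
its zeros, and once it is `0` the restricted function is constant: `D(f) ≤ bs(f) · ndeg(f)`.
-/

open Finset

section PowersetSums

variable {α β : Type*} [DecidableEq α] [AddCommMonoid β]

lemma sum_powerset_union_of_disjoint {A B : Finset α} (hAB : Disjoint A B)
    (g : Finset α → β) :
    ∑ S ∈ (A ∪ B).powerset, g S = ∑ U ∈ A.powerset, ∑ T ∈ B.powerset, g (U ∪ T) := by
  induction B using Finset.induction_on generalizing g with
  | empty => simp
  | insert b B hbB ih =>
    have hbA : b ∉ A := disjoint_left.1 hAB.symm (mem_insert_self b B)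
    have hAB' : Disjoint A B := hAB.mono_right (subset_insert b B)
    rw [union_insert, sum_powerset_insert (fun h => (mem_union.1 h).elim hbA hbB), ih hAB',
      ih hAB', ← sum_add_distrib]
    refine sum_congr rfl fun U _ => ?_
    simp only [sum_powerset_insert hbB, union_insert]

end PowersetSums

section MultilinearCoefficients

variable {ι : Type*} [Fintype ι]

def ones (x : ι → Bool) : Finset ι := {i | x i = true}

@[simp] lemma mem_ones {x : ι → Bool} {i : ι} : i ∈ ones x ↔ x i = true := by
  simp [ones]

/-- `q` stands for the coefficients of the multilinear polynomial `∑ S, q S * ∏ i ∈ S, X i`. -/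
def mlEval (q : Finset ι → ℝ) (x : ι → Bool) : ℝ := ∑ S ∈ (ones x).powerset, q S

lemma exists_maximal_ne_zero {q : Finset ι → ℝ} (hq : ∃ S, q S ≠ 0) :
    ∃ M, q M ≠ 0 ∧ ∀ S, M ⊂ S → q S = 0 := by
  obtain ⟨S₀, hS₀⟩ := hq
  obtain ⟨M, hM, hMmax⟩ := ({S | q S ≠ 0} : Finset (Finset ι)).exists_maximal ⟨S₀, by simpa⟩
  refine ⟨M, by simpa using hM, fun S hMS => by_contra fun hS => ?_⟩
  exact hMS.not_subset (hMmax (by simpa using hS) hMS.subset)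

variable [DecidableEq ι]

lemma ones_piecewise (F : Finset ι) (σ x : ι → Bool) :
    ones (F.piecewise σ x) = (ones x \ F) ∪ (ones σ ∩ F) := by
  ext i
  by_cases hi : i ∈ F <;> simp [hi]

lemma eq_zero_of_mlEval_eq_zero {q : Finset ι → ℝ} (h : ∀ x, mlEval q x = 0) (S : Finset ι) :
    q S = 0 := by
  induction S using Finset.strongInduction with
  | H S ih =>
    have hS : ones (fun i => decide (i ∈ S)) = S := by ext i; simp
    have h0 := h fun i => decide (i ∈ S)
    rwa [mlEval, hS, ← add_sum_erase _ _ (mem_powerset_self S),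
      sum_eq_zero fun T hT => ih T ?_, add_zero] at h0
    exact ssubset_of_subset_of_ne (mem_powerset.1 (mem_of_mem_erase hT)) (ne_of_mem_erase hT)

def restrictCoeff (q : Finset ι → ℝ) (F : Finset ι) (σ : ι → Bool) (S : Finset ι) : ℝ :=
  if Disjoint S F then ∑ T ∈ (ones σ ∩ F).powerset, q (S ∪ T) else 0

lemma mlEval_restrictCoeff (q : Finset ι → ℝ) (F : Finset ι) (σ x : ι → Bool) :
    mlEval (restrictCoeff q F σ) x = mlEval q (F.piecewise σ x) := by
  have hdisj : Disjoint (ones x \ F) (ones σ ∩ F) :=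
    disjoint_of_subset_right inter_subset_right sdiff_disjoint
  have hfilter : (ones x).powerset.filter (Disjoint · F) = (ones x \ F).powerset := by
    ext S; simp [subset_sdiff]
  rw [mlEval, mlEval, ones_piecewise, sum_powerset_union_of_disjoint hdisj, ← hfilter,
    sum_filter]
  rfl

lemma card_le_of_restrictCoeff_ne_zero {q : Finset ι → ℝ} {d : ℕ}
    (hq : ∀ S, q S ≠ 0 → S.card ≤ d) {F : Finset ι} {σ : ι → Bool} {S : Finset ι}
    (hS : restrictCoeff q F σ S ≠ 0) : S.card ≤ d := by
  unfold restrictCoeff at hS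
  split_ifs at hS
  · obtain ⟨T, -, hT⟩ := exists_ne_zero_of_sum_ne_zero hS
    exact (card_le_card subset_union_left).trans (hq _ hT)
  · exact absurd rfl hS

/-- The maxonomial lemma: once the variables outside `M` are fixed, the coefficient of `M` is
still `q M`, by maximality. -/
lemma exists_mlEval_ne_zero {q : Finset ι → ℝ} {M : Finset ι} (hM : q M ≠ 0)
    (hmax : ∀ S, M ⊂ S → q S = 0) (z : ι → Bool) :
    ∃ y, (∀ i ∉ M, y i = z i) ∧ mlEval q y ≠ 0 := by
  by_contra! h
  have hzero : ∀ x, mlEval (restrictCoeff q Mᶜ z) x = 0 := fun x => by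
    rw [mlEval_restrictCoeff]
    exact h _ fun i hi => piecewise_eq_of_mem _ _ _ (mem_compl.2 hi)
  refine hM ?_
  have hMc : restrictCoeff q Mᶜ z M = q M := by
    rw [restrictCoeff, if_pos disjoint_compl_right,
      sum_eq_single_of_mem ∅ (empty_mem_powerset _), union_empty]
    intro T hT hT0
    have hTc : T ⊆ Mᶜ := (mem_powerset.1 hT).trans inter_subset_right
    exact hmax _ (left_lt_sup.2 fun hTM => hT0 (subset_empty.1 fun i hi =>
      (mem_compl.1 (hTc hi) (hTM hi)).elim))
  rw [← hMc]
  exact eq_zero_of_mlEval_eq_zero hzero M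

end MultilinearCoefficients

section Polynomials

open MvPolynomial

variable {ι : Type*}

section Indicator

variable [Fintype ι]

noncomputable def indicatorPoly (a : ι → Bool) : MvPolynomial ι ℝ :=
  ∏ i, if a i then X i else 1 - X i

lemma eval_indicatorPoly (a x : ι → Bool) :
    eval (fun i => boolToReal (x i)) (indicatorPoly a) = if x = a then 1 else 0 := by
  have h : ∀ i, eval (fun i => boolToReal (x i)) (if a i then X i else 1 - X i)
      = if x i = a i then 1 else 0 := by
    intro i
    cases a i <;> cases hx : x i <;> simp [boolToReal, hx]
  simp_rw [indicatorPoly, map_prod, h, Fintype.prod_boole, _root_.funext_iff]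

end Indicator

variable [DecidableEq ι]

/-- On the Boolean cube `X i ^ k = X i` for `k ≥ 1`, so a monomial only matters through its
support. -/
def mlCoeff (p : MvPolynomial ι ℝ) (S : Finset ι) : ℝ :=
  ∑ m ∈ p.support with m.support = S, p.coeff m

lemma card_le_totalDegree_of_mlCoeff_ne_zero {p : MvPolynomial ι ℝ} {S : Finset ι}
    (hS : mlCoeff p S ≠ 0) : S.card ≤ p.totalDegree := by
  obtain ⟨m, hm, -⟩ := exists_ne_zero_of_sum_ne_zero hS
  obtain ⟨hmp, rfl⟩ := mem_filter.1 hm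
  calc m.support.card = ∑ i ∈ m.support, 1 := card_eq_sum_ones _
    _ ≤ ∑ i ∈ m.support, m i :=
      sum_le_sum fun i hi => Nat.one_le_iff_ne_zero.2 (Finsupp.mem_support_iff.1 hi)
    _ ≤ p.totalDegree := le_totalDegree hmp

variable [Fintype ι]

lemma prod_boolToReal_pow (x : ι → Bool) (m : ι →₀ ℕ) :
    ∏ i, boolToReal (x i) ^ m i = if m.support ⊆ ones x then 1 else 0 := by
  have h : ∀ i, boolToReal (x i) ^ m i = if i ∈ m.support → x i = true then 1 else 0 := by
    intro i
    cases x i <;> by_cases hm : m i = 0 <;> simp [boolToReal, hm]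
  simp_rw [h, Fintype.prod_boole, subset_iff, mem_ones]

lemma eval_boolToReal_eq_mlEval (p : MvPolynomial ι ℝ) (x : ι → Bool) :
    eval (fun i => boolToReal (x i)) p = mlEval (mlCoeff p) x := by
  simp_rw [eval_eq', prod_boolToReal_pow, mul_ite, mul_one, mul_zero, ← sum_filter, mlEval,
    mlCoeff, sum_fiberwise_eq_sum_filter, mem_powerset]

lemma degreeOf_indicatorPoly_le (a : ι → Bool) (i : ι) : degreeOf i (indicatorPoly a) ≤ 1 := by
  have h : ∀ j, degreeOf i (if a j then X j else 1 - X j : MvPolynomial ι ℝ)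
      ≤ if j = i then 1 else 0 := by
    intro j
    have hX : degreeOf i (X j : MvPolynomial ι ℝ) = if j = i then 1 else 0 := by
      rw [degreeOf_X]; simp [eq_comm]
    by_cases ha : a j = true
    · rw [if_pos ha]
      exact hX.le
    · rw [if_neg ha]
      exact (degreeOf_sub_le _ _ _).trans
        (max_le ((degreeOf_one i).trans_le (Nat.zero_le _)) hX.le)
  calc degreeOf i (indicatorPoly a) ≤ ∑ j, degreeOf i (if a j then X j else 1 - X j) :=
        degreeOf_prod_le _ _ _
    _ ≤ ∑ j, if j = i then 1 else 0 := sum_le_sum fun j _ => h j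
    _ = 1 := by simp

end Polynomials

lemma multilinear_iff_degreeOf_le {N : ℕ} (p : MvPolynomial (Fin N) ℝ) :
    Multilinear p ↔ ∀ i, MvPolynomial.degreeOf i p ≤ 1 := by
  simp only [Multilinear, MvPolynomial.degreeOf_le_iff]
  exact ⟨fun h i m hm => h m hm i, fun h m hm i => h i m hm⟩

lemma exists_multilinear_eRepresents {N : ℕ} (f : (Fin N → Bool) → Bool) :
    ∃ p, Multilinear p ∧ ERepresents p f := by
  refine ⟨∑ a with f a = true, indicatorPoly a, ?_, fun x => ?_⟩
  · rw [multilinear_iff_degreeOf_le]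
    exact fun i => (MvPolynomial.degreeOf_sum_le _ _ _).trans
      (Finset.sup_le fun a _ => degreeOf_indicatorPoly_le a i)
  · simp only [map_sum, eval_indicatorPoly]
    rw [sum_ite_eq]
    cases h : f x <;> simp [boolToReal, h]

lemma ERepresents.nRepresents {N : ℕ} {p : MvPolynomial (Fin N) ℝ} {f : (Fin N → Bool) → Bool}
    (h : ERepresents p f) : NRepresents p f := fun x => by
  rw [h x]
  cases f x <;> simp [boolToReal]

section DecisionTrees

variable {N : ℕ}

def IsSensitiveFamily (f : (Fin N → Bool) → Bool) (x : Fin N → Bool)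
    (Bs : Finset (Finset (Fin N))) : Prop :=
  (∀ B ∈ Bs, SensitiveBlock f x B) ∧ (Bs : Set (Finset (Fin N))).Pairwise Disjoint

def BlockSensOnZerosLE (f : (Fin N → Bool) → Bool) (c : ℕ) : Prop :=
  ∀ z, f z = false → ∀ Bs, IsSensitiveFamily f z Bs → Bs.card ≤ c

def ComputableInDepth (f : (Fin N → Bool) → Bool) (D : ℕ) : Prop :=
  ∃ T : DTree N, T.depth ≤ D ∧ ∀ x, T.eval x = f x

@[simp] lemma flipSet_empty (x : Fin N → Bool) : flipSet x ∅ = x := by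
  funext i; simp [flipSet]

lemma flipSet_filter_ne (y z : Fin N → Bool) : flipSet z {i | y i ≠ z i} = y := by
  funext i
  cases hy : y i <;> cases hz : z i <;> simp [flipSet, hy, hz]

lemma piecewise_flipSet (M : Finset (Fin N)) (τ z : Fin N → Bool) (B : Finset (Fin N)) :
    M.piecewise τ (flipSet z B) = flipSet (M.piecewise τ z) (B \ M) := by
  funext i
  by_cases hi : i ∈ M <;> simp [flipSet, hi]

lemma SensitiveBlock.nonempty {f : (Fin N → Bool) → Bool} {x : Fin N → Bool}
    {B : Finset (Fin N)} (h : SensitiveBlock f x B) : B.Nonempty := by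
  rw [nonempty_iff_ne_empty]
  rintro rfl
  exact h (by rw [flipSet_empty])

lemma IsSensitiveFamily.insert {f : (Fin N → Bool) → Bool} {x : Fin N → Bool}
    {Bs : Finset (Finset (Fin N))} {B : Finset (Fin N)} (hBs : IsSensitiveFamily f x Bs)
    (hB : SensitiveBlock f x B) (hdisj : ∀ B' ∈ Bs, Disjoint B B') :
    IsSensitiveFamily f x (insert B Bs) ∧ (insert B Bs).card = Bs.card + 1 := by
  have hBnotin : B ∉ Bs := fun hmem =>
    hB.nonempty.ne_empty (disjoint_self.1 (hdisj B hmem))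
  refine ⟨⟨fun B' hB' => ?_, ?_⟩, card_insert_of_notMem hBnotin⟩
  · rcases mem_insert.1 hB' with rfl | hB'
    · exact hB
    · exact hBs.1 B' hB'
  · rw [coe_insert]
    exact hBs.2.insert fun B' hB' _ => ⟨hdisj B' hB', (hdisj B' hB').symm⟩

lemma IsSensitiveFamily.image_sdiff {f : (Fin N → Bool) → Bool} {M : Finset (Fin N)}
    {τ z : Fin N → Bool} {Bs : Finset (Finset (Fin N))}
    (hBs : IsSensitiveFamily (fun x => f (M.piecewise τ x)) z Bs) :
    IsSensitiveFamily f (M.piecewise τ z) (Bs.image (· \ M)) ∧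
      (Bs.image (· \ M)).card = Bs.card := by
  have hsens : ∀ B ∈ Bs, SensitiveBlock f (M.piecewise τ z) (B \ M) := fun B hB => by
    have := hBs.1 B hB
    rwa [SensitiveBlock, piecewise_flipSet] at this
  have hdisj : ∀ B ∈ Bs, ∀ B' ∈ Bs, B ≠ B' → Disjoint (B \ M) (B' \ M) :=
    fun B hB B' hB' hne => (hBs.2 hB hB' hne).mono sdiff_subset sdiff_subset
  refine ⟨⟨?_, ?_⟩, card_image_of_injOn fun B hB B' hB' heq => ?_⟩
  · simp only [mem_image, forall_exists_index, and_imp, forall_apply_eq_imp_iff₂]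
    exact hsens
  · rw [coe_image]
    rintro _ ⟨B, hB, rfl⟩ _ ⟨B', hB', rfl⟩ hne
    exact hdisj B hB B' hB' fun h => hne (h ▸ rfl)
  · by_contra hne
    have := hdisj B hB B' hB' hne
    rw [show B \ M = B' \ M from heq, disjoint_self] at this
    exact (hsens B' hB').nonempty.ne_empty this

lemma BlockSensOnZerosLE.piecewise {f : (Fin N → Bool) → Bool} {c : ℕ}
    (hf : BlockSensOnZerosLE f (c + 1)) {M : Finset (Fin N)}
    (hM : ∀ z, f z = false → ∃ B ⊆ M, SensitiveBlock f z B) (τ : Fin N → Bool) :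
    BlockSensOnZerosLE (fun x => f (M.piecewise τ x)) c := by
  intro z hz Bs hBs
  obtain ⟨hfam, hcard⟩ := hBs.image_sdiff
  obtain ⟨B, hBM, hB⟩ := hM _ hz
  obtain ⟨hfam', hcard'⟩ := hfam.insert hB fun B' hB' => by
    obtain ⟨C, -, rfl⟩ := mem_image.1 hB'
    exact disjoint_sdiff.mono_left hBM
  have := hf _ hz _ hfam'
  omega

lemma BlockSensOnZerosLE.exists_eq_const {f : (Fin N → Bool) → Bool}
    (hf : BlockSensOnZerosLE f 0) : ∃ b, ∀ x, f x = b := by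
  by_cases hz : ∃ z, f z = false
  · obtain ⟨z, hz⟩ := hz
    refine ⟨false, fun x => ?_⟩
    by_contra hx
    have hB : SensitiveBlock f z {i | x i ≠ z i} := by
      rw [SensitiveBlock, flipSet_filter_ne, hz]
      exact hx
    have := hf z hz {_} ⟨by simpa using hB, by simp⟩
    simp at this
  · exact ⟨true, fun x => by simpa using not_exists.1 hz x⟩

lemma bsAt_le_card (f : (Fin N → Bool) → Bool) (x : Fin N → Bool) :
    bsAt f x ≤ Fintype.card (Finset (Fin N)) :=
  csSup_le' fun _ ⟨Bs, hk, _⟩ => hk ▸ card_le_univ Bs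

lemma blockSensOnZerosLE_blockSens (f : (Fin N → Bool) → Bool) :
    BlockSensOnZerosLE f (blockSens f) := fun z _ Bs hBs =>
  calc Bs.card ≤ bsAt f z :=
        le_csSup ⟨_, fun _ ⟨Bs, hk, _⟩ => hk ▸ card_le_univ Bs⟩ ⟨Bs, rfl, hBs⟩
    _ ≤ blockSens f :=
        le_csSup ⟨_, by rintro _ ⟨x, rfl⟩; exact bsAt_le_card f x⟩ ⟨z, rfl⟩

lemma ComputableInDepth.mono {f : (Fin N → Bool) → Bool} {D D' : ℕ}
    (hf : ComputableInDepth f D) (h : D ≤ D') : ComputableInDepth f D' :=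
  let ⟨T, hT, hTf⟩ := hf
  ⟨T, hT.trans h, hTf⟩

lemma computableInDepth_of_forall_eq {f : (Fin N → Bool) → Bool} {b : Bool}
    (h : ∀ x, f x = b) (D : ℕ) : ComputableInDepth f D :=
  ⟨.leaf b, Nat.zero_le D, fun x => (h x).symm⟩

lemma computableInDepth_of_piecewise {f : (Fin N → Bool) → Bool} {D : ℕ} (M : Finset (Fin N))
    (h : ∀ τ, ComputableInDepth (fun x => f (M.piecewise τ x)) D) :
    ComputableInDepth f (M.card + D) := by
  induction M using Finset.induction_on generalizing f with
  | empty => simpa using h fun _ => false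
  | insert i M hi ih =>
    have hbranch : ∀ b, ComputableInDepth (fun x => f (Function.update x i b)) (M.card + D) := by
      intro b
      refine ih fun τ => ?_
      convert h (Function.update τ i b) using 3 with x
      funext j
      by_cases hj : j = i
      · subst hj; simp
      · simp [Finset.piecewise, hj]
    obtain ⟨T₀, hT₀, hT₀f⟩ := hbranch false
    obtain ⟨T₁, hT₁, hT₁f⟩ := hbranch true
    refine ⟨.node i T₀ T₁, ?_, fun x => ?_⟩
    · simp only [DTree.depth, card_insert_of_notMem hi]
      omega
    · rw [DTree.eval, hT₀f, hT₁f]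
      conv_rhs => rw [← Function.update_eq_self i x]
      cases x i <;> simp

end DecisionTrees

section Main

variable {N : ℕ}

lemma exists_sensitiveBlock_subset {f : (Fin N → Bool) → Bool} {q : Finset (Fin N) → ℝ}
    (hrep : ∀ x, mlEval q x = 0 ↔ f x = false) {M : Finset (Fin N)} (hM : q M ≠ 0)
    (hmax : ∀ S, M ⊂ S → q S = 0) (z : Fin N → Bool) (hz : f z = false) :
    ∃ B ⊆ M, SensitiveBlock f z B := by
  obtain ⟨y, hyz, hy⟩ := exists_mlEval_ne_zero hM hmax z
  refine ⟨({i | y i ≠ z i} : Finset (Fin N)),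
    fun i hi => by_contra fun hiM => (mem_filter.1 hi).2 (hyz i hiM), ?_⟩
  rw [SensitiveBlock, flipSet_filter_ne, hz]
  exact fun hfy => hy ((hrep y).2 hfy)

theorem computableInDepth_mul_of_blockSensOnZerosLE {d : ℕ} :
    ∀ (c : ℕ) {f : (Fin N → Bool) → Bool} {q : Finset (Fin N) → ℝ}, (∀ S, q S ≠ 0 → S.card ≤ d) →
    (∀ x, mlEval q x = 0 ↔ f x = false) → BlockSensOnZerosLE f c → ComputableInDepth f (c * d)
  | 0, _, _, _, _, hf =>
    let ⟨_, hb⟩ := hf.exists_eq_const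
    computableInDepth_of_forall_eq hb _
  | c + 1, f, q, hdeg, hrep, hf => by
    by_cases hq : ∃ S, q S ≠ 0
    · obtain ⟨M, hM, hmax⟩ := exists_maximal_ne_zero hq
      have hsens := exists_sensitiveBlock_subset hrep hM hmax
      refine (computableInDepth_of_piecewise M fun τ =>
        computableInDepth_mul_of_blockSensOnZerosLE c (q := restrictCoeff q M τ)
        (fun S hS => card_le_of_restrictCoeff_ne_zero hdeg hS) (fun x => ?_)
        (hf.piecewise hsens τ)).mono ?_
      · rw [mlEval_restrictCoeff]
        exact hrep _
      · rw [Nat.succ_mul, add_comm]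
        exact Nat.add_le_add_left (hdeg M hM) _
    · refine computableInDepth_of_forall_eq (b := false) (fun x => (hrep x).1 ?_) _
      exact sum_eq_zero fun S _ => not_not.1 (not_exists.1 hq S)

lemma exists_nRepresents_totalDegree_eq_ndeg (f : (Fin N → Bool) → Bool) :
    ∃ p, Multilinear p ∧ NRepresents p f ∧ p.totalDegree = ndeg f := by
  obtain ⟨p, hp, hrep⟩ := exists_multilinear_eRepresents f
  exact Nat.sInf_mem (s := {d | ∃ p, Multilinear p ∧ NRepresents p f ∧ p.totalDegree = d})
    ⟨_, p, hp, hrep.nRepresents, rfl⟩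

theorem dcomplexity_le_blockSens_mul_ndeg (f : (Fin N → Bool) → Bool) :
    Dcomplexity f ≤ blockSens f * ndeg f := by
  obtain ⟨p, -, hp, hdeg⟩ := exists_nRepresents_totalDegree_eq_ndeg f
  refine Nat.sInf_le (computableInDepth_mul_of_blockSensOnZerosLE _
    (fun S hS => hdeg ▸ card_le_totalDegree_of_mlCoeff_ne_zero hS) (fun x => ?_)
    (blockSensOnZerosLE_blockSens f))
  rw [← eval_boolToReal_eq_mlEval]
  exact hp x

end Main

/-- `D(f) ≤ (bs(f) + 1) * ndeg(f)` for every total Boolean function. -/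
theorem stmt8 (N : ℕ) (f : (Fin N → Bool) → Bool) :
    Dcomplexity f ≤ (blockSens f + 1) * ndeg f :=
  (dcomplexity_le_blockSens_mul_ndeg f).trans (Nat.mul_le_mul_right _ (Nat.le_succ _))
end

section
/- Zero-error from two-sided error: for every total Boolean function f on {0,1}^N, R_0(f) = O(R_2(f) · bs(f) · log N), where R_0 is zero-error (Las Vegas) randomized query complexity and R_2 is bounded two-sided error randomized query complexity. -/
/-- A randomized decision tree: a finitely supported probability distribution over
deterministic decision trees. -/
structure RandTree (N : ℕ) where
  m : ℕ
  w : Fin m → ℝ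
  nonneg : ∀ i, 0 ≤ w i
  sum_one : ∑ i, w i = 1
  tree : Fin m → DTree N

/-- every tree in the support has depth at most `q` -/
def RandTree.depthLE {N : ℕ} (R : RandTree N) (q : ℕ) : Prop :=
  ∀ i, R.w i ≠ 0 → (R.tree i).depth ≤ q

noncomputable def RandTree.probOutput {N : ℕ} (R : RandTree N) (x : Fin N → Bool) (b : Bool) : ℝ :=
  ∑ i, if (R.tree i).eval x = b then R.w i else 0

noncomputable def RandTree.probQueries {N : ℕ} (R : RandTree N) (x : Fin N → Bool)
    (B : Finset (Fin N)) : ℝ :=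
  ∑ i, if ((R.tree i).queries x ∩ B) ≠ ∅ then R.w i else 0

/-- two-sided bounded error randomized query complexity (success probability ≥ 4/5) -/
noncomputable def R2 {N : ℕ} (f : (Fin N → Bool) → Bool) : ℕ :=
  sInf {q | ∃ R : RandTree N, R.depthLE q ∧ ∀ x, 4/5 ≤ R.probOutput x (f x)}

/-- decision trees that may answer `none` ("?") -/
inductive DTree3 (N : ℕ) : Type
  | leaf : Option Bool → DTree3 N
  | node : Fin N → DTree3 N → DTree3 N → DTree3 N

def DTree3.eval {N : ℕ} : DTree3 N → (Fin N → Bool) → Option Bool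
  | .leaf b, _ => b
  | .node i t0 t1, x => if x i then t1.eval x else t0.eval x

def DTree3.depth {N : ℕ} : DTree3 N → ℕ
  | .leaf _ => 0
  | .node _ t0 t1 => 1 + max t0.depth t1.depth

structure RandTree3 (N : ℕ) where
  m : ℕ
  w : Fin m → ℝ
  nonneg : ∀ i, 0 ≤ w i
  sum_one : ∑ i, w i = 1
  tree : Fin m → DTree3 N

/-- zero-error (Las Vegas) randomized query complexity: never wrong, "?" with prob ≤ 1/5 -/
noncomputable def R0 {N : ℕ} (f : (Fin N → Bool) → Bool) : ℕ :=
  sInf {q | ∃ R : RandTree3 N,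
    (∀ i, R.w i ≠ 0 → (R.tree i).depth ≤ q) ∧
    (∀ x, ∀ i, R.w i ≠ 0 → (R.tree i).eval x = some (f x) ∨ (R.tree i).eval x = none) ∧
    (∀ x, (∑ i, if (R.tree i).eval x = none then R.w i else 0) ≤ 1/5)}

namespace DTree

def append {N : ℕ} : DTree N → DTree N → DTree N
  | .leaf _, u => u
  | .node i t0 t1, u => .node i (t0.append u) (t1.append u)

lemma depth_append {N : ℕ} (t u : DTree N) : (t.append u).depth ≤ t.depth + u.depth := by
  induction t with
  | leaf b => simp [append, depth]
  | node i t0 t1 h0 h1 =>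
    simp only [append, depth]
    omega

lemma queries_append {N : ℕ} (t u : DTree N) (x : Fin N → Bool) :
    (t.append u).queries x = t.queries x ∪ u.queries x := by
  induction t with
  | leaf b => simp [append, queries]
  | node i t0 t1 h0 h1 =>
    simp only [append, queries]
    by_cases h : x i <;> simp [h, h0, h1, Finset.insert_union]

lemma eval_flipSet {N : ℕ} (t : DTree N) (x : Fin N → Bool) (B : Finset (Fin N))
    (h : Disjoint (t.queries x) B) : t.eval (flipSet x B) = t.eval x := by
  induction t with
  | leaf b => rfl
  | node i t0 t1 h0 h1 =>
    simp only [queries, Finset.disjoint_insert_left] at h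
    have hx : flipSet x B i = x i := by simp [flipSet, h.1]
    simp only [eval, hx]
    by_cases hxi : x i
    · rw [if_pos hxi, if_pos hxi]
      exact h1 (by simpa [hxi] using h.2)
    · rw [if_neg hxi, if_neg hxi]
      exact h0 (by simpa [hxi] using h.2)

def lift {N : ℕ} : DTree N → DTree (N + 1)
  | .leaf b => .leaf b
  | .node i t0 t1 => .node i.succ t0.lift t1.lift

lemma depth_lift {N : ℕ} (t : DTree N) : t.lift.depth = t.depth := by
  induction t with
  | leaf b => rfl
  | node i t0 t1 h0 h1 => simp [lift, depth, h0, h1]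

lemma eval_lift {N : ℕ} (t : DTree N) (x : Fin (N + 1) → Bool) :
    t.lift.eval x = t.eval (fun i => x i.succ) := by
  induction t with
  | leaf b => rfl
  | node i t0 t1 h0 h1 => simp [lift, eval, h0, h1]

lemma exists_full (N : ℕ) (f : (Fin N → Bool) → Bool) :
    ∃ T : DTree N, T.depth ≤ N ∧ ∀ x, T.eval x = f x := by
  induction N with
  | zero =>
    refine ⟨.leaf (f (fun i => i.elim0)), by simp [depth], fun x => ?_⟩
    have hx : x = fun i => i.elim0 := funext fun i => i.elim0
    rw [hx]
    rfl
  | succ N ih =>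
    obtain ⟨T0, hd0, he0⟩ := ih (fun z => f (Fin.cons false z))
    obtain ⟨T1, hd1, he1⟩ := ih (fun z => f (Fin.cons true z))
    refine ⟨.node 0 T0.lift T1.lift, ?_, ?_⟩
    · simp only [depth, depth_lift]; omega
    · intro x
      have hx : Fin.cons (x 0) (Fin.tail x) = x := Fin.cons_self_tail x
      simp only [eval, eval_lift]
      by_cases h : x 0
      · rw [if_pos h, he1]
        conv_rhs => rw [← hx]
        rw [h]
        rfl
      · rw [if_neg h]
        rw [Bool.not_eq_true] at h
        rw [he0]
        conv_rhs => rw [← hx]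
        rw [h]
        rfl

end DTree
namespace RandTree

variable {N : ℕ}

noncomputable def missProb (R : RandTree N) (x : Fin N → Bool) (B : Finset (Fin N)) : ℝ :=
  ∑ i, if Disjoint ((R.tree i).queries x) B then R.w i else 0

lemma missProb_nonneg (R : RandTree N) (x : Fin N → Bool) (B : Finset (Fin N)) :
    0 ≤ R.missProb x B :=
  Finset.sum_nonneg fun i _ => by
    by_cases h : Disjoint ((R.tree i).queries x) B <;> simp [h, R.nonneg i]

lemma missProb_le (R : RandTree N) (f : (Fin N → Bool) → Bool)
    (hR : ∀ x, 4/5 ≤ R.probOutput x (f x)) (x : Fin N → Bool) (B : Finset (Fin N))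
    (hB : SensitiveBlock f x B) : R.missProb x B ≤ 2/5 := by
  set y := flipSet x B with hy
  have key : ∀ i : Fin R.m,
      (if (R.tree i).eval x = f x then R.w i else 0) +
        (if (R.tree i).eval y = f y then R.w i else 0) +
        (if Disjoint ((R.tree i).queries x) B then R.w i else 0) ≤ 2 * R.w i := by
    intro i
    have hw := R.nonneg i
    by_cases hd : Disjoint ((R.tree i).queries x) B
    · have he : (R.tree i).eval y = (R.tree i).eval x := DTree.eval_flipSet _ _ _ hd
      have hnot : ¬((R.tree i).eval x = f x ∧ (R.tree i).eval y = f y) := by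
        rintro ⟨h1, h2⟩
        rw [he, h1] at h2
        exact hB h2.symm
      rw [if_pos hd]
      by_cases h1 : (R.tree i).eval x = f x
      · rw [if_pos h1, if_neg (fun h2 => hnot ⟨h1, h2⟩)]
        linarith
      · rw [if_neg h1]
        by_cases h2 : (R.tree i).eval y = f y <;> simp [h2] <;> linarith
    · rw [if_neg hd]
      by_cases h1 : (R.tree i).eval x = f x <;>
        by_cases h2 : (R.tree i).eval y = f y <;> simp [h1, h2] <;> linarith
  have hsum := Finset.sum_le_sum (fun i (_ : i ∈ Finset.univ) => key i)
  rw [Finset.sum_add_distrib, Finset.sum_add_distrib, ← Finset.mul_sum, R.sum_one] at hsum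
  have h1 := hR x
  have h2 := hR y
  unfold RandTree.probOutput at h1 h2
  unfold missProb
  linarith

noncomputable def comp (R S : RandTree N) : RandTree N where
  m := R.m * S.m
  w := fun i => R.w (finProdFinEquiv.symm i).1 * S.w (finProdFinEquiv.symm i).2
  nonneg := fun i => mul_nonneg (R.nonneg _) (S.nonneg _)
  sum_one := by
    rw [← Equiv.sum_comp (finProdFinEquiv : Fin R.m × Fin S.m ≃ Fin (R.m * S.m))
      (fun i => R.w (finProdFinEquiv.symm i).1 * S.w (finProdFinEquiv.symm i).2)]
    simp only [Equiv.symm_apply_apply]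
    rw [Fintype.sum_prod_type]
    simp only [← Finset.mul_sum, S.sum_one, mul_one]
    exact R.sum_one
  tree := fun i => ((R.tree (finProdFinEquiv.symm i).1).append (S.tree (finProdFinEquiv.symm i).2))

lemma comp_depthLE (R S : RandTree N) (a b : ℕ) (hR : R.depthLE a) (hS : S.depthLE b) :
    (R.comp S).depthLE (a + b) := by
  intro i hi
  have h := mul_ne_zero_iff.mp hi
  exact le_trans (DTree.depth_append _ _) (add_le_add (hR _ h.1) (hS _ h.2))

lemma comp_missProb (R S : RandTree N) (x : Fin N → Bool) (B : Finset (Fin N)) :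
    (R.comp S).missProb x B = R.missProb x B * S.missProb x B := by
  unfold missProb
  show (∑ i : Fin (R.m * S.m), _) = _
  rw [← Equiv.sum_comp (finProdFinEquiv : Fin R.m × Fin S.m ≃ Fin (R.m * S.m))]
  have hterm : ∀ p : Fin R.m × Fin S.m,
      (if Disjoint (((R.comp S).tree (finProdFinEquiv p)).queries x) B
        then (R.comp S).w (finProdFinEquiv p) else 0) =
      (if Disjoint ((R.tree p.1).queries x) B then R.w p.1 else 0) *
        (if Disjoint ((S.tree p.2).queries x) B then S.w p.2 else 0) := by
    intro p
    show (if Disjoint (((R.tree _).append (S.tree _)).queries x) B then _ * _ else 0) = _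
    simp only [Equiv.symm_apply_apply, DTree.queries_append, Finset.disjoint_union_left]
    by_cases h1 : Disjoint ((R.tree p.1).queries x) B <;>
      by_cases h2 : Disjoint ((S.tree p.2).queries x) B <;>
      simp [h1, h2]
  rw [Finset.sum_congr rfl (fun p _ => hterm p), Fintype.sum_prod_type]
  rw [Finset.sum_mul_sum]

noncomputable def pow (R : RandTree N) : ℕ → RandTree N
  | 0 => { m := 1, w := fun _ => 1, nonneg := fun _ => zero_le_one, sum_one := by simp,
           tree := fun _ => .leaf true }
  | k + 1 => (R.pow k).comp R

lemma pow_depthLE (R : RandTree N) (q : ℕ) (h : R.depthLE q) (k : ℕ) :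
    (R.pow k).depthLE (k * q) := by
  induction k with
  | zero => intro i _; simp [pow, DTree.depth]
  | succ k ih =>
    have := comp_depthLE (R.pow k) R (k * q) q ih h
    simpa [pow, Nat.succ_mul] using this

lemma pow_missProb (R : RandTree N) (x : Fin N → Bool) (B : Finset (Fin N)) (k : ℕ) :
    (R.pow k).missProb x B = (R.missProb x B) ^ k := by
  induction k with
  | zero => simp [pow, missProb, DTree.queries]; exact Finset.card_fin 1
  | succ k ih => rw [pow, comp_missProb, ih, pow_succ]

end RandTree
def Agree {N : ℕ} (x : Fin N → Bool) (ρ : Fin N → Option Bool) : Prop :=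
  ∀ i b, ρ i = some b → x i = b

lemma Agree.update {N : ℕ} {x : Fin N → Bool} {ρ : Fin N → Option Bool} {i : Fin N} {b : Bool}
    (h : Agree x ρ) (hb : x i = b) : Agree x (Function.update ρ i (some b)) := by
  intro j c hj
  rcases eq_or_ne j i with rfl | hne
  · rw [Function.update_self] at hj
    cases hj
    exact hb
  · rw [Function.update_of_ne hne] at hj
    exact h j c hj

noncomputable def fill {N : ℕ} (ρ : Fin N → Option Bool) : Fin N → Bool :=
  fun i => (ρ i).getD false

open Classical in
noncomputable def decide3 {N : ℕ} (f : (Fin N → Bool) → Bool) (ρ : Fin N → Option Bool) :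
    Option Bool :=
  if ∀ z, Agree z ρ → f z = f (fill ρ) then some (f (fill ρ)) else none

noncomputable def certify {N : ℕ} (f : (Fin N → Bool) → Bool) :
    DTree N → (Fin N → Option Bool) → DTree3 N
  | .leaf _, ρ => .leaf (decide3 f ρ)
  | .node i t0 t1, ρ =>
      .node i (certify f t0 (Function.update ρ i (some false)))
        (certify f t1 (Function.update ρ i (some true)))

lemma certify_depth {N : ℕ} (f : (Fin N → Bool) → Bool) (t : DTree N) :
    ∀ ρ, (certify f t ρ).depth = t.depth := by
  induction t with
  | leaf b => intro ρ; rfl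
  | node i t0 t1 ih0 ih1 =>
    intro ρ
    simp [certify, DTree3.depth, DTree.depth, ih0, ih1]

lemma certify_sound {N : ℕ} (f : (Fin N → Bool) → Bool) (t : DTree N) :
    ∀ ρ x, Agree x ρ →
      (certify f t ρ).eval x = some (f x) ∨ (certify f t ρ).eval x = none := by
  induction t with
  | leaf b =>
    intro ρ x hx
    simp only [certify, DTree3.eval, decide3]
    split_ifs with h
    · left
      rw [h x hx]
    · right; rfl
  | node i t0 t1 ih0 ih1 =>
    intro ρ x hx
    simp only [certify, DTree3.eval]
    by_cases hxi : x i
    · rw [if_pos hxi]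
      exact ih1 _ x (hx.update hxi)
    · rw [if_neg hxi]
      exact ih0 _ x (hx.update (by simpa using hxi))

lemma certify_complete {N : ℕ} (f : (Fin N → Bool) → Bool) (t : DTree N) :
    ∀ ρ x, Agree x ρ → (certify f t ρ).eval x = none →
      ∃ y, f y ≠ f x ∧ (∀ i, ρ i ≠ none → y i = x i) ∧ ∀ i ∈ t.queries x, y i = x i := by
  induction t with
  | leaf b =>
    intro ρ x hx h
    have h' : decide3 f ρ = none := h
    unfold decide3 at h'
    split_ifs at h' with hcond
    push_neg at hcond
    obtain ⟨z, hz, hzf⟩ := hcond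
    have hagree : ∀ w : Fin N → Bool, Agree w ρ → ∀ i, ρ i ≠ none → w i = x i := by
      intro w hw i hi
      rcases Option.ne_none_iff_exists'.mp hi with ⟨c, hc⟩
      rw [hw i c hc, hx i c hc]
    have hfillagree : Agree (fill ρ) ρ := by
      intro i c hc
      simp [fill, hc]
    by_cases hfz : f z = f x
    · refine ⟨fill ρ, ?_, hagree _ hfillagree, by simp [DTree.queries]⟩
      rw [← hfz]
      exact fun c => hzf c.symm
    · exact ⟨z, hfz, hagree z hz, by simp [DTree.queries]⟩
  | node i t0 t1 ih0 ih1 =>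
    intro ρ x hx h
    have h' : (if x i then (certify f t1 (Function.update ρ i (some true))).eval x
        else (certify f t0 (Function.update ρ i (some false))).eval x) = none := h
    by_cases hxi : x i
    · rw [if_pos hxi] at h'
      obtain ⟨y, h1, h2, h3⟩ := ih1 (Function.update ρ i (some true)) x (hx.update hxi) h'
      refine ⟨y, h1, fun j hj => ?_, fun j hj => ?_⟩
      · apply h2
        rcases eq_or_ne j i with rfl | hne
        · simp [Function.update_self]
        · rwa [Function.update_of_ne hne]
      · have : j ∈ insert i (t1.queries x) := by
          simpa [DTree.queries, hxi] using hj
        rcases Finset.mem_insert.mp this with rfl | hj'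
        · apply h2
          simp [Function.update_self]
        · exact h3 j hj'
    · rw [if_neg hxi] at h'
      obtain ⟨y, h1, h2, h3⟩ := ih0 (Function.update ρ i (some false))
        x (hx.update (by simpa using hxi)) h'
      refine ⟨y, h1, fun j hj => ?_, fun j hj => ?_⟩
      · apply h2
        rcases eq_or_ne j i with rfl | hne
        · simp [Function.update_self]
        · rwa [Function.update_of_ne hne]
      · have : j ∈ insert i (t0.queries x) := by
          simpa [DTree.queries, hxi] using hj
        rcases Finset.mem_insert.mp this with rfl | hj'
        · apply h2
          simp [Function.update_self]
        · exact h3 j hj'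

lemma flip_diff {N : ℕ} (x y : Fin N → Bool) [DecidablePred fun i => y i ≠ x i] :
    flipSet x (Finset.univ.filter (fun i => y i ≠ x i)) = y := by
  funext i
  by_cases hy : y i = x i
  · simp [flipSet, hy]
  · simp only [flipSet, Finset.mem_filter, Finset.mem_univ, true_and, if_pos hy]
    revert hy
    cases x i <;> cases y i <;> simp

lemma exists_block_of_none {N : ℕ} (f : (Fin N → Bool) → Bool) (t : DTree N)
    (x : Fin N → Bool) (h : (certify f t (fun _ => none)).eval x = none) :
    ∃ B : Finset (Fin N), SensitiveBlock f x B ∧ Disjoint ((t.queries x)) B := by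
  classical
  obtain ⟨y, h1, -, h3⟩ := certify_complete f t (fun _ => none) x
    (fun i b hb => by exact absurd hb (by simp)) h
  refine ⟨Finset.univ.filter (fun i => y i ≠ x i), ?_, ?_⟩
  · unfold SensitiveBlock
    rw [flip_diff x y]
    exact h1
  · rw [Finset.disjoint_right]
    intro j hj hjq
    rw [Finset.mem_filter] at hj
    exact hj.2 (h3 j hjq)
lemma exists_minimal {N : ℕ} (f : (Fin N → Bool) → Bool) (x : Fin N → Bool) :
    ∀ B : Finset (Fin N), SensitiveBlock f x B →
      ∃ B', B' ⊆ B ∧ MinimalSensitiveBlock f x B' := by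
  intro B
  induction B using Finset.strongInductionOn with
  | _ B ih =>
    intro hB
    by_cases h : ∀ B' ⊂ B, ¬ SensitiveBlock f x B'
    · exact ⟨B, Finset.Subset.refl B, hB, h⟩
    · push_neg at h
      obtain ⟨B', hB'sub, hB'⟩ := h
      obtain ⟨B'', h1, h2⟩ := ih B' hB'sub hB'
      exact ⟨B'', h1.trans hB'sub.subset, h2⟩

lemma sensitive_nonempty {N : ℕ} {f : (Fin N → Bool) → Bool} {x : Fin N → Bool}
    {B : Finset (Fin N)} (h : SensitiveBlock f x B) : B.Nonempty := by
  rcases B.eq_empty_or_nonempty with rfl | h'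
  · exfalso
    apply h
    have he : flipSet x ∅ = x := funext fun i => by simp [flipSet]
    rw [he]
  · exact h'

lemma bsAt_member_le {N : ℕ} (f : (Fin N → Bool) → Bool) (x : Fin N → Bool) :
    ∀ k ∈ {k | ∃ Bs : Finset (Finset (Fin N)), Bs.card = k ∧
      (∀ B ∈ Bs, SensitiveBlock f x B) ∧
      (Bs : Set (Finset (Fin N))).Pairwise (fun B B' => Disjoint B B')}, k ≤ N := by
  rintro k ⟨Bs, rfl, hsens, hdisj⟩
  classical
  have hd : ∀ B ∈ Bs, ∀ B' ∈ Bs, B ≠ B' → Disjoint (id B) (id B') := by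
    intro B hB B' hB' hne
    exact hdisj (Finset.mem_coe.mpr hB) (Finset.mem_coe.mpr hB') hne
  have hcard : (Bs.biUnion id).card = ∑ B ∈ Bs, B.card := Finset.card_biUnion hd
  have h1 : Bs.card ≤ ∑ B ∈ Bs, B.card := by
    calc Bs.card = ∑ _B ∈ Bs, 1 := by simp
    _ ≤ ∑ B ∈ Bs, B.card := Finset.sum_le_sum fun B hB =>
        Finset.card_pos.mpr (sensitive_nonempty (hsens B hB))
  calc Bs.card ≤ (Bs.biUnion id).card := by rw [hcard]; exact h1
  _ ≤ (Finset.univ : Finset (Fin N)).card := Finset.card_le_univ _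
  _ = N := by simp

lemma bsAt_le {N : ℕ} (f : (Fin N → Bool) → Bool) (x : Fin N → Bool) : bsAt f x ≤ N := by
  apply csSup_le
  · exact ⟨0, ⟨∅, by simp, by simp, by simp⟩⟩
  · exact bsAt_member_le f x

lemma le_blockSens {N : ℕ} {f : (Fin N → Bool) → Bool} (x : Fin N → Bool) :
    bsAt f x ≤ blockSens f := by
  apply le_csSup
  · exact ⟨N, by rintro k ⟨y, rfl⟩; exact bsAt_le f y⟩
  · exact Set.mem_range_self x

lemma le_bsAt {N : ℕ} {f : (Fin N → Bool) → Bool} {x : Fin N → Bool} {k : ℕ}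
    (h : ∃ Bs : Finset (Finset (Fin N)), Bs.card = k ∧
      (∀ B ∈ Bs, SensitiveBlock f x B) ∧
      (Bs : Set (Finset (Fin N))).Pairwise (fun B B' => Disjoint B B')) :
    k ≤ bsAt f x := by
  apply le_csSup
  · exact ⟨N, bsAt_member_le f x⟩
  · exact h

lemma flip_flip_erase {N : ℕ} (x : Fin N → Bool) (B : Finset (Fin N)) {i : Fin N}
    (hi : i ∈ B) : flipSet (flipSet x B) {i} = flipSet x (B.erase i) := by
  funext j
  rcases eq_or_ne j i with rfl | hne
  · simp [flipSet, hi]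
  · simp [flipSet, hne, Finset.mem_erase]

lemma minimal_card_le_blockSens {N : ℕ} {f : (Fin N → Bool) → Bool} {x : Fin N → Bool}
    {B : Finset (Fin N)} (h : MinimalSensitiveBlock f x B) : B.card ≤ blockSens f := by
  classical
  have hx' : ∀ i ∈ B, SensitiveBlock f (flipSet x B) {i} := by
    intro i hi
    unfold SensitiveBlock
    rw [flip_flip_erase x B hi]
    have h1 : f (flipSet x (B.erase i)) = f x := by
      have := h.2 (B.erase i) (Finset.erase_ssubset hi)
      unfold SensitiveBlock at this
      exact not_not.mp this
    rw [h1]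
    exact fun c => h.1 c.symm
  have hmem : ∃ Bs : Finset (Finset (Fin N)), Bs.card = B.card ∧
      (∀ B' ∈ Bs, SensitiveBlock f (flipSet x B) B') ∧
      (Bs : Set (Finset (Fin N))).Pairwise (fun B B' => Disjoint B B') := by
    refine ⟨B.image (fun i => {i}), ?_, ?_, ?_⟩
    · exact Finset.card_image_of_injective _ (fun a b hab => by
        simpa using hab)
    · intro B' hB'
      obtain ⟨i, hi, rfl⟩ := Finset.mem_image.mp hB'
      exact hx' i hi
    · intro B1 hB1 B2 hB2 hne
      obtain ⟨i, hi, rfl⟩ := Finset.mem_image.mp (Finset.mem_coe.mp hB1)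
      obtain ⟨j, hj, rfl⟩ := Finset.mem_image.mp (Finset.mem_coe.mp hB2)
      simp only [Finset.disjoint_singleton]
      intro hc
      exact hne (by rw [hc])
  exact le_trans (le_bsAt hmem) (le_blockSens _)

lemma count_blocks (N s : ℕ) (hN : 1 ≤ N) :
    ((Finset.univ : Finset (Finset (Fin N))).filter (fun B => B.card ≤ s)).card
      ≤ (s + 1) * N ^ s := by
  classical
  have hsub : ((Finset.univ : Finset (Finset (Fin N))).filter (fun B => B.card ≤ s))
      ⊆ (Finset.range (s + 1)).biUnion
        (fun j => Finset.powersetCard j (Finset.univ : Finset (Fin N))) := by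
    intro B hB
    rw [Finset.mem_filter] at hB
    rw [Finset.mem_biUnion]
    exact ⟨B.card, Finset.mem_range.mpr (Nat.lt_succ_of_le hB.2),
      Finset.mem_powersetCard_univ.mpr rfl⟩
  calc _ ≤ ((Finset.range (s + 1)).biUnion
        (fun j => Finset.powersetCard j (Finset.univ : Finset (Fin N)))).card :=
      Finset.card_le_card hsub
  _ ≤ ∑ j ∈ Finset.range (s + 1), (Finset.powersetCard j (Finset.univ : Finset (Fin N))).card :=
      Finset.card_biUnion_le
  _ ≤ (s + 1) * N ^ s := by
    have hb : ∀ j ∈ Finset.range (s + 1),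
        (Finset.powersetCard j (Finset.univ : Finset (Fin N))).card ≤ N ^ s := by
      intro j hj
      rw [Finset.card_powersetCard, Finset.card_univ, Fintype.card_fin]
      exact le_trans (Nat.choose_le_pow N j)
        (Nat.pow_le_pow_right hN (Nat.lt_succ_iff.mp (Finset.mem_range.mp hj)))
    have := Finset.sum_le_card_nsmul (Finset.range (s + 1)) _ (N ^ s) hb
    simpa [smul_eq_mul] using this
lemma R0_le_of {N : ℕ} (f : (Fin N → Bool) → Bool) (q k : ℕ) (R : RandTree N)
    (hd : R.depthLE q) (hc : ∀ x, 4/5 ≤ R.probOutput x (f x))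
    (hk : (((blockSens f + 1) * N ^ blockSens f : ℕ) : ℝ) * (2/5) ^ k ≤ 1/5)
    (hN : 1 ≤ N) :
    R0 f ≤ k * q := by
  classical
  set Rk := R.pow k with hRk
  set R3 : RandTree3 N := ⟨Rk.m, Rk.w, Rk.nonneg, Rk.sum_one,
    fun i => certify f (Rk.tree i) (fun _ => none)⟩ with hR3
  apply Nat.sInf_le
  refine ⟨R3, ?_, ?_, ?_⟩
  · intro i hi
    show (certify f (Rk.tree i) _).depth ≤ k * q
    rw [certify_depth]
    exact R.pow_depthLE q hd k i hi
  · intro x i _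
    exact certify_sound f (Rk.tree i) _ x (fun j b hb => absurd hb (by simp))
  · intro x
    set Blocks := (Finset.univ : Finset (Finset (Fin N))).filter
      (fun B => MinimalSensitiveBlock f x B) with hBlocks
    have hsubB : Blocks ⊆ (Finset.univ : Finset (Finset (Fin N))).filter
        (fun B => B.card ≤ blockSens f) := by
      intro B hB
      rw [Finset.mem_filter] at hB ⊢
      exact ⟨hB.1, minimal_card_le_blockSens hB.2⟩
    have pointwise : ∀ i : Fin Rk.m,
        (if (R3.tree i).eval x = none then R3.w i else 0) ≤
          ∑ B ∈ Blocks, (if Disjoint ((Rk.tree i).queries x) B then Rk.w i else 0) := by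
      intro i
      by_cases h : (R3.tree i).eval x = none
      · rw [if_pos h]
        obtain ⟨B, hBs, hBd⟩ := exists_block_of_none f (Rk.tree i) x h
        obtain ⟨B', hsub, hmin⟩ := exists_minimal f x B hBs
        have hB'm : B' ∈ Blocks := Finset.mem_filter.mpr ⟨Finset.mem_univ _, hmin⟩
        have hB'd : Disjoint ((Rk.tree i).queries x) B' :=
          Finset.disjoint_of_subset_right hsub hBd
        have h1 : R3.w i = (if Disjoint ((Rk.tree i).queries x) B' then Rk.w i else 0) := by
          rw [if_pos hB'd]
        rw [h1]
        exact Finset.single_le_sum (f := fun B =>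
            if Disjoint ((Rk.tree i).queries x) B then Rk.w i else 0)
          (fun B _ => by
            by_cases hd' : Disjoint ((Rk.tree i).queries x) B <;> simp [hd', Rk.nonneg i])
          hB'm
      · rw [if_neg h]
        exact Finset.sum_nonneg fun B _ => by
          by_cases hd' : Disjoint ((Rk.tree i).queries x) B <;> simp [hd', Rk.nonneg i]
    calc (∑ i, if (R3.tree i).eval x = none then R3.w i else 0)
        ≤ ∑ i, ∑ B ∈ Blocks, (if Disjoint ((Rk.tree i).queries x) B then Rk.w i else 0) :=
          Finset.sum_le_sum fun i _ => pointwise i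
    _ = ∑ B ∈ Blocks, Rk.missProb x B := by
          rw [Finset.sum_comm]
          rfl
    _ ≤ ∑ B ∈ Blocks, (2/5 : ℝ) ^ k := by
          refine Finset.sum_le_sum fun B hB => ?_
          rw [hRk, R.pow_missProb]
          exact pow_le_pow_left₀ (R.missProb_nonneg x B)
            (R.missProb_le f hc x B (Finset.mem_filter.mp hB).2.1) k
    _ = (Blocks.card : ℝ) * (2/5) ^ k := by rw [Finset.sum_const, nsmul_eq_mul]
    _ ≤ (((blockSens f + 1) * N ^ blockSens f : ℕ) : ℝ) * (2/5) ^ k := by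
          refine mul_le_mul_of_nonneg_right ?_ (by positivity)
          exact_mod_cast le_trans (Finset.card_le_card hsubB) (count_blocks N _ hN)
    _ ≤ 1/5 := hk
def DTree.toT3 {N : ℕ} : DTree N → DTree3 N
  | .leaf b => .leaf (some b)
  | .node i t0 t1 => .node i t0.toT3 t1.toT3

lemma DTree.toT3_depth {N : ℕ} (t : DTree N) : t.toT3.depth = t.depth := by
  induction t with
  | leaf b => rfl
  | node i t0 t1 h0 h1 => simp [DTree.toT3, DTree3.depth, DTree.depth, h0, h1]

lemma DTree.toT3_eval {N : ℕ} (t : DTree N) (x : Fin N → Bool) :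
    t.toT3.eval x = some (t.eval x) := by
  induction t with
  | leaf b => rfl
  | node i t0 t1 h0 h1 =>
    simp only [DTree.toT3, DTree3.eval, DTree.eval]
    by_cases h : x i <;> simp [h, h0, h1]

lemma R0_le_dim (N : ℕ) (f : (Fin N → Bool) → Bool) : R0 f ≤ N := by
  obtain ⟨T, hd, he⟩ := DTree.exists_full N f
  apply Nat.sInf_le
  refine ⟨⟨1, fun _ => 1, fun _ => zero_le_one, by simp, fun _ => T.toT3⟩, ?_, ?_, ?_⟩
  · intro i _
    simpa [DTree.toT3_depth] using hd
  · intro x i _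
    left
    rw [DTree.toT3_eval, he]
  · intro x
    norm_num [DTree.toT3_eval]
    rw [if_neg (Option.some_ne_none _)]
    norm_num

lemma R0_le_zero {N : ℕ} {f : (Fin N → Bool) → Bool}
    (h : ∀ x, f x = f (fun _ => false)) : R0 f ≤ 0 := by
  apply Nat.sInf_le
  refine ⟨⟨1, fun _ => 1, fun _ => zero_le_one, by simp,
    fun _ => .leaf (some (f (fun _ => false)))⟩, ?_, ?_, ?_⟩
  · intro i _
    exact le_refl 0
  · intro x i _
    left
    show some (f (fun _ => false)) = some (f x)
    rw [h x]
  · intro x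
    norm_num [DTree3.eval]
    rw [if_neg (Option.some_ne_none _)]
    norm_num

lemma exists_R2 {N : ℕ} (f : (Fin N → Bool) → Bool) :
    ∃ R : RandTree N, R.depthLE (R2 f) ∧ ∀ x, 4/5 ≤ R.probOutput x (f x) := by
  have hne : {q | ∃ R : RandTree N, R.depthLE q ∧ ∀ x, 4/5 ≤ R.probOutput x (f x)}.Nonempty := by
    obtain ⟨T, hd, he⟩ := DTree.exists_full N f
    refine ⟨N, ⟨1, fun _ => 1, fun _ => zero_le_one, by simp, fun _ => T⟩,
      fun i _ => hd, fun x => by norm_num [RandTree.probOutput, he]⟩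
  exact Nat.sInf_mem hne

lemma one_le_blockSens {N : ℕ} {f : (Fin N → Bool) → Bool} (x y : Fin N → Bool)
    (h : f x ≠ f y) : 1 ≤ blockSens f := by
  classical
  have hs : SensitiveBlock f x (Finset.univ.filter (fun i => y i ≠ x i)) := by
    unfold SensitiveBlock
    rw [flip_diff x y]
    exact fun c => h c.symm
  have h1 : 1 ≤ bsAt f x := by
    refine le_bsAt ⟨{Finset.univ.filter (fun i => y i ≠ x i)}, Finset.card_singleton _, ?_, ?_⟩
    · intro B hB
      rw [Finset.mem_singleton] at hB
      rw [hB]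
      exact hs
    · rw [Finset.coe_singleton]
      exact Set.pairwise_singleton _ _
  exact h1.trans (le_blockSens x)
/-- `R_0(f) = O(R_2(f) * bs(f) * log N)` for every total Boolean function. -/
theorem stmt17 : ∃ C : ℝ, 0 < C ∧
    ∀ (N : ℕ) (f : (Fin N → Bool) → Bool),
      (R0 f : ℝ) ≤ C * (R2 f) * (blockSens f) * Real.log N + C := by
  refine ⟨11, by norm_num, ?_⟩
  intro N f
  have hlogN : 0 ≤ Real.log N := Real.log_natCast_nonneg N
  have hterm : 0 ≤ (11:ℝ) * (R2 f) * (blockSens f) * Real.log N := by positivity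
  by_cases hconst : ∀ x, f x = f (fun _ => false)
  · have h0 : R0 f ≤ 0 := R0_le_zero hconst
    have h0' : (R0 f : ℝ) ≤ 0 := by exact_mod_cast h0
    linarith
  · push_neg at hconst
    obtain ⟨x₀, hx₀⟩ := hconst
    have hN1 : 1 ≤ N := by
      rcases Nat.eq_zero_or_pos N with rfl | h
      · exfalso
        apply hx₀
        congr 1
        funext i
        exact i.elim0
      · exact h
    rcases eq_or_lt_of_le hN1 with hNeq | hN2
    · -- N = 1
      subst hNeq
      have h1 : R0 f ≤ 1 := R0_le_dim 1 f
      have h1' : (R0 f : ℝ) ≤ 1 := by exact_mod_cast h1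
      norm_num
      linarith
    · -- N ≥ 2
      obtain ⟨R, hRd, hRc⟩ := exists_R2 f
      set q := R2 f with hq
      set s := blockSens f with hsdef
      have hs1 : 1 ≤ s := one_le_blockSens x₀ _ hx₀
      set M : ℕ := (s + 1) * N ^ s with hMdef
      have hMpos : 0 < M := by positivity
      have hM1 : (1:ℝ) ≤ (M:ℝ) := by exact_mod_cast hMpos
      set k := ⌈Real.log (5 * M) / Real.log (5/2)⌉₊ with hkdef
      have hlog52 : 0 < Real.log (5/2) := Real.log_pos (by norm_num)
      have h5M : (1:ℝ) ≤ 5 * M := by linarith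
      have hlog5M : 0 ≤ Real.log (5 * M) := Real.log_nonneg h5M
      have hkub : (k:ℝ) ≤ Real.log (5*M)/Real.log (5/2) + 1 :=
        le_of_lt (Nat.ceil_lt_add_one (by positivity))
      have hkineq : Real.log (5*M) ≤ (k:ℝ) * Real.log (5/2) := by
        have hle := Nat.le_ceil (Real.log (5*M)/Real.log (5/2))
        calc Real.log (5*M) = (Real.log (5*M)/Real.log (5/2)) * Real.log (5/2) := by
              field_simp
        _ ≤ (k:ℝ) * Real.log (5/2) := mul_le_mul_of_nonneg_right hle (le_of_lt hlog52)
      have hpowk : (5:ℝ)*M ≤ (5/2)^k := by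
        have h2 : Real.log ((5/2:ℝ)^k) = (k:ℝ) * Real.log (5/2) := by rw [Real.log_pow]
        rw [← h2] at hkineq
        exact (Real.log_le_log_iff (by linarith) (by positivity)).mp hkineq
      have hkcond : (M:ℝ) * (2/5)^k ≤ 1/5 := by
        have hpos : (0:ℝ) < (5/2)^k := by positivity
        have h25 : ((2:ℝ)/5)^k = ((5/2)^k)⁻¹ := by
          rw [← inv_pow]
          norm_num
        rw [h25, mul_inv_le_iff₀' hpos]
        linarith
      have hR0 : (R0 f : ℝ) ≤ (k : ℝ) * q := by
        have hle := R0_le_of f q k R hRd hRc (by exact_mod_cast hkcond) hN1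
        exact_mod_cast hle
      set L := Real.log N with hLdef
      have hlog2 : (0.6931471803:ℝ) < Real.log 2 := Real.log_two_gt_d9
      have hNR : (2:ℝ) ≤ (N:ℝ) := by exact_mod_cast hN2
      have hL2 : Real.log 2 ≤ L := Real.log_le_log (by norm_num) hNR
      have hLpos : (0.6931471803:ℝ) < L := lt_of_lt_of_le hlog2 hL2
      have hsR : (1:ℝ) ≤ (s:ℝ) := by exact_mod_cast hs1
      have hL0 : (0:ℝ) ≤ L := by linarith
      have hsL : L ≤ (s:ℝ) * L := by nlinarith
      have hA : (0.6931471803:ℝ) ≤ (s:ℝ) * L := by linarith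
      have hsL0 : (0:ℝ) ≤ (s:ℝ) * L := by linarith
      have hlog5 : Real.log 5 ≤ 3 * L := by
        have h53 : (5:ℝ) ≤ (N:ℝ)^(3:ℕ) := by
          have h8 := pow_le_pow_left₀ (by norm_num : (0:ℝ) ≤ 2) hNR 3
          norm_num at h8
          linarith
        calc Real.log 5 ≤ Real.log ((N:ℝ)^(3:ℕ)) := Real.log_le_log (by norm_num) h53
        _ = 3 * L := by rw [Real.log_pow]; norm_num; exact hLdef.symm
      have hlogs1 : Real.log ((s:ℝ)+1) ≤ (s:ℝ) * L := by
        have hnat : s + 1 ≤ N ^ s :=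
          le_trans (Nat.lt_two_pow_self (n := s)) (Nat.pow_le_pow_left hN2 s)
        have h2s : ((s:ℝ)+1) ≤ (N:ℝ)^(s:ℕ) := by exact_mod_cast hnat
        calc Real.log ((s:ℝ)+1) ≤ Real.log ((N:ℝ)^(s:ℕ)) :=
              Real.log_le_log (by positivity) h2s
        _ = (s:ℝ) * L := by rw [Real.log_pow]
      have hlogM : Real.log (5*(M:ℝ)) ≤ 5 * ((s:ℝ) * L) := by
        have hMexp : (M:ℝ) = ((s:ℝ)+1) * (N:ℝ)^(s:ℕ) := by
          rw [hMdef]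
          push_cast
          ring
        rw [Real.log_mul (by norm_num) (by linarith), hMexp,
          Real.log_mul (by positivity) (by positivity), Real.log_pow]
        linarith
      have hlog52ge : Real.log 2 ≤ Real.log (5/2) := Real.log_le_log (by norm_num) (by norm_num)
      have hkle : (k:ℝ) ≤ 10 * ((s:ℝ) * L) := by
        have hdiv1 : Real.log (5*(M:ℝ))/Real.log (5/2) ≤ (5 * ((s:ℝ)*L))/Real.log 2 :=
          div_le_div₀ (by linarith) hlogM (by linarith) hlog52ge
        have hdiv2 : (5 * ((s:ℝ)*L))/Real.log 2 ≤ (5 * ((s:ℝ)*L))/0.6931471803 :=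
          div_le_div_of_nonneg_left (by linarith) (by norm_num) (le_of_lt hlog2)
        have hdiv3 : (5 * ((s:ℝ)*L))/0.6931471803 ≤ 8 * ((s:ℝ)*L) := by
          rw [div_le_iff₀ (by norm_num)]
          linarith
        have h1le : (1:ℝ) ≤ 2 * ((s:ℝ)*L) := by linarith
        linarith
      have hq0 : (0:ℝ) ≤ (q:ℝ) := Nat.cast_nonneg q
      have hfin : (k:ℝ) * q ≤ 10 * ((s:ℝ)*L) * q := mul_le_mul_of_nonneg_right hkle hq0
      have hqsL : 0 ≤ (q:ℝ) * s * L := by positivity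
      linarith [hR0, hfin, hqsL]
end
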